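/- Let V = ℝ⁴ with dual basis e¹, …, e⁴ of V*. For λ ∈ ℝ and a real 2×2 matrix A = [[a, b],[c, d]], define the 2-form Ω_{λ,A} = λ e¹∧e² + e¹∧(a e³ + b e⁴) − e²∧(c e³ + d e⁴) ∈ Λ²V*. Let λ₂, λ₃ ∈ ℝ and let A₂, A₃ be invertible real 2×2 matrices, and set Ω_i = Ω_{λ_i, A_i} for i = 2, 3. Then the two conditions Ω₂∧Ω₂ = Ω₃∧Ω₃ and Ω₂∧Ω₃ = 0 hold simultaneously if and only if the matrix B = A₂⁻¹A₃ satisfies det(B) = 1 and tr(B) = 0. -/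

import Mathlib

/-!
Expanding the wedge product gives `Ω_{λ,A} ∧ Ω_{λ',A'} = tr(adj(A) A') e¹∧e²∧e³∧e⁴`, the
polarization of `det`; in particular `Ω_{λ,A} ∧ Ω_{λ,A} = 2 det(A) e¹∧e²∧e³∧e⁴`. So the two
conditions say `det A₂ = det A₃` and `tr(adj(A₂) A₃) = 0`, while
`det B = det A₃ / det A₂` and `tr B = tr(adj(A₂) A₃) / det A₂`.
-/

/-- The basis covectors `e¹, …, e⁴` of `V*`, viewed as degree-one elements of the
exterior algebra `Λ(V*)`. -/
noncomputable def E (i : Fin 4) : ExteriorAlgebra ℝ (Fin 4 → ℝ) :=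
  ExteriorAlgebra.ι ℝ (Pi.single i 1)

/-- The 2-form `Ω_{λ,A} = λ e¹∧e² + e¹∧(a e³ + b e⁴) − e²∧(c e³ + d e⁴)`, where
`A = [[a, b], [c, d]]`. -/
noncomputable def OmLA (lam : ℝ) (A : Matrix (Fin 2) (Fin 2) ℝ) :
    ExteriorAlgebra ℝ (Fin 4 → ℝ) :=
  lam • (E 0 * E 1)
    + E 0 * ExteriorAlgebra.ι ℝ (A 0 0 • (Pi.single 2 1 : Fin 4 → ℝ) + A 0 1 • (Pi.single 3 1 : Fin 4 → ℝ))
    - E 1 * ExteriorAlgebra.ι ℝ (A 1 0 • (Pi.single 2 1 : Fin 4 → ℝ) + A 1 1 • (Pi.single 3 1 : Fin 4 → ℝ))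

namespace ExteriorAlgebra

section

variable {R M : Type*} [CommRing R] [AddCommGroup M] [Module R M]

theorem ι_mul_ι_comm (x y : M) : ι R x * ι R y = -(ι R y * ι R x) :=
  eq_neg_of_add_eq_zero_left (ι_add_mul_swap x y)

theorem ι_mul_ι_mul_comm (x y : M) (z : ExteriorAlgebra R M) :
    ι R x * (ι R y * z) = -(ι R y * (ι R x * z)) := by
  rw [← mul_assoc, ← mul_assoc, ι_mul_ι_comm, neg_mul]

theorem ι_mul_ι_self_mul (x : M) (z : ExteriorAlgebra R M) : ι R x * (ι R x * z) = 0 := by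
  rw [← mul_assoc, ι_sq_zero, zero_mul]

theorem ι_mul_ι_mul_ι_self_mul (x y : M) (z : ExteriorAlgebra R M) :
    ι R x * (ι R y * (ι R x * z)) = 0 := by
  rw [ι_mul_ι_mul_comm y x, mul_neg, ι_mul_ι_self_mul, neg_zero]

theorem ι_mul_ι_mul_ι_mul_ι_self (x y z : M) :
    ι R x * (ι R y * (ι R z * ι R x)) = 0 := by
  rw [ι_mul_ι_comm z, mul_neg, mul_neg, ι_mul_ι_mul_ι_self_mul, neg_zero]

theorem two_form_mul_two_form (l l' : R) (x y u v u' v' : M) :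
    (l • (ι R x * ι R y) + ι R x * ι R u - ι R y * ι R v) *
        (l' • (ι R x * ι R y) + ι R x * ι R u' - ι R y * ι R v') =
      ι R x * ι R y * (ι R u * ι R v' + ι R u' * ι R v) := by
  simp only [mul_add, add_mul, mul_sub, sub_mul, smul_mul_assoc, mul_smul_comm, mul_assoc,
    ι_mul_ι_mul_ι_self_mul, ι_mul_ι_mul_ι_mul_ι_self, ι_mul_ι_self_mul, mul_zero, add_zero,
    zero_add, sub_zero, zero_sub, smul_zero]
  rw [ι_mul_ι_mul_comm u y, ι_mul_ι_mul_comm v x, mul_neg, ι_mul_ι_mul_comm y x,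
    ι_mul_ι_comm v u']
  simp only [mul_neg, neg_neg, sub_neg_eq_add]
  abel

theorem ι_smul_add_smul_mul_ι_smul_add_smul (a b c d : R) (p q : M) :
    ι R (a • p + b • q) * ι R (c • p + d • q) = (a * d - b * c) • (ι R p * ι R q) := by
  simp only [map_add, map_smul, add_mul, mul_add, smul_mul_smul, ι_sq_zero, ι_mul_ι_comm q p,
    smul_zero, zero_add, add_zero, smul_neg]
  module

end

theorem ιMulti_single_ne_zero (R : Type*) [CommRing R] [Nontrivial R] (n : ℕ) :
    ιMulti R n (fun i => (Pi.single i 1 : Fin n → R)) ≠ 0 := by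
  intro h
  have hdet := congrArg (liftAlternating
    (Pi.single (M := fun k => (Fin n → R) [⋀^Fin k]→ₗ[R] R) n Matrix.detRowAlternating)) h
  rw [liftAlternating_apply_ιMulti, map_zero, Pi.single_eq_same] at hdet
  refine one_ne_zero (Eq.trans ?_ hdet)
  exact Matrix.det_one.symm.trans
    (congrArg Matrix.det (funext fun _ => funext fun _ => Matrix.one_eq_pi_single))

end ExteriorAlgebra

namespace Matrix

theorem trace_inv_mul {n K : Type*} [Fintype n] [DecidableEq n] [Field K]
    (A B : Matrix n n K) : (A⁻¹ * B).trace = A.det⁻¹ * (A.adjugate * B).trace := by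
  rw [inv_def, Ring.inverse_eq_inv', smul_mul_assoc, trace_smul, smul_eq_mul]

theorem trace_adjugate_mul_fin_two {R : Type*} [CommRing R] (A B : Matrix (Fin 2) (Fin 2) R) :
    (A.adjugate * B).trace = A 0 0 * B 1 1 - A 0 1 * B 1 0 + (B 0 0 * A 1 1 - B 0 1 * A 1 0) := by
  simp [adjugate_fin_two, trace_fin_two, vecMul, dotProduct, Fin.sum_univ_two]
  ring

end Matrix

open ExteriorAlgebra

theorem OmLA_mul_OmLA (l l' : ℝ) (A A' : Matrix (Fin 2) (Fin 2) ℝ) :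
    OmLA l A * OmLA l' A' =
      (A.adjugate * A').trace • ιMulti ℝ 4 (fun i => (Pi.single i 1 : Fin 4 → ℝ)) := by
  simp only [OmLA, E]
  rw [two_form_mul_two_form, ι_smul_add_smul_mul_ι_smul_add_smul,
    ι_smul_add_smul_mul_ι_smul_add_smul, ← add_smul, mul_smul_comm,
    Matrix.trace_adjugate_mul_fin_two]
  simp [ιMulti_apply, mul_assoc, Matrix.vecTail, Function.comp_def]

theorem OmLA_mul_self (l : ℝ) (A : Matrix (Fin 2) (Fin 2) ℝ) :
    OmLA l A * OmLA l A = (2 * A.det) • ιMulti ℝ 4 (fun i => (Pi.single i 1 : Fin 4 → ℝ)) := by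
  rw [OmLA_mul_OmLA, Matrix.adjugate_mul, Matrix.trace_smul, Matrix.trace_one, Fintype.card_fin,
    smul_eq_mul, mul_comm, Nat.cast_ofNat]

theorem holomorphic_symplectic_iff_general (lam₂ lam₃ : ℝ)
    (A₂ A₃ : Matrix (Fin 2) (Fin 2) ℝ)
    (hA₂ : IsUnit A₂.det)
    (B : Matrix (Fin 2) (Fin 2) ℝ) (hB : B = A₂⁻¹ * A₃) :
    (OmLA lam₂ A₂ * OmLA lam₂ A₂ = OmLA lam₃ A₃ * OmLA lam₃ A₃ ∧
        OmLA lam₂ A₂ * OmLA lam₃ A₃ = 0) ↔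
      (B.det = 1 ∧ B.trace = 0) := by
  have hvol := ιMulti_single_ne_zero ℝ 4
  have hdet := hA₂.ne_zero
  rw [OmLA_mul_self, OmLA_mul_self, OmLA_mul_OmLA, (smul_left_injective ℝ hvol).eq_iff,
    smul_eq_zero_iff_left hvol, mul_right_inj' two_ne_zero, hB, Matrix.det_mul,
    Matrix.det_nonsing_inv, Ring.inverse_eq_inv', inv_mul_eq_one₀ hdet, Matrix.trace_inv_mul,
    mul_eq_zero, or_iff_right (inv_ne_zero hdet)]

/-- `Θ = Ω₂ + iΩ₃` with `Ω_i = Ω_{λ_i, A_i}` satisfies `Θ∧Θ = 0` (equivalently,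
`Ω₂∧Ω₂ = Ω₃∧Ω₃` and `Ω₂∧Ω₃ = 0`) if and only if `B = A₂⁻¹A₃` has `det B = 1` and
`tr B = 0`. -/
theorem holomorphic_symplectic_iff (lam₂ lam₃ : ℝ)
    (A₂ A₃ : Matrix (Fin 2) (Fin 2) ℝ)
    (hA₂ : IsUnit A₂.det) (hA₃ : IsUnit A₃.det)
    (B : Matrix (Fin 2) (Fin 2) ℝ) (hB : B = A₂⁻¹ * A₃) :
    (OmLA lam₂ A₂ * OmLA lam₂ A₂ = OmLA lam₃ A₃ * OmLA lam₃ A₃ ∧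
        OmLA lam₂ A₂ * OmLA lam₃ A₃ = 0) ↔
      (B.det = 1 ∧ B.trace = 0) :=
  holomorphic_symplectic_iff_general lam₂ lam₃ A₂ A₃ hA₂ B hB
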